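/- Let m ≥ 7 with m ≡ 5 (mod 6), and suppose SG(m − i) ≠ 2 for all 0 ≤ i ≤ 7, where SG is the Sprague–Grundy function of the game i-Mark({1},{2,3}). Then SG(m) = 0. -/
import Mathlib


/-- The minimum excludant of a finite set of naturals. -/
noncomputable def mex (s : Finset ℕ) : ℕ := sInf {x : ℕ | x ∉ s}

/-- Sprague–Grundy function of the game i-Mark({1},{2,3}):
from a positive pile of `n` tokens one may subtract `1`,
or move to `n / 2` if `2 ∣ n`, or to `n / 3` if `3 ∣ n`. -/
noncomputable def sg : ℕ → ℕ
  | 0 => 0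
  | n + 1 =>
    mex ({sg n} ∪
         (if 2 ∣ (n + 1) then {sg ((n + 1) / 2)} else ∅) ∪
         (if 3 ∣ (n + 1) then {sg ((n + 1) / 3)} else ∅))
termination_by n => n
decreasing_by
  · omega
  · exact Nat.div_lt_self (Nat.succ_pos n) (by norm_num)
  · exact Nat.div_lt_self (Nat.succ_pos n) (by norm_num)

lemma mex_not_mem (s : Finset ℕ) : mex s ∉ s := by
  have : {x : ℕ | x ∉ s}.Nonempty := by
    obtain ⟨x, hx⟩ := s.exists_notMem
    exact ⟨x, hx⟩
  exact Nat.sInf_mem this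

lemma mex_eq_zero {s : Finset ℕ} (h : 0 ∉ s) : mex s = 0 :=
  Nat.sInf_eq_zero.mpr (Or.inl h)

lemma zero_mem_of_mex_ne_zero {s : Finset ℕ} (h : mex s ≠ 0) : 0 ∈ s := by
  by_contra hc; exact h (mex_eq_zero hc)

lemma mex_le {s : Finset ℕ} {x : ℕ} (h : x ∉ s) : mex s ≤ x := Nat.sInf_le h

lemma mex_pair_le (a b : ℕ) : mex {a, b} ≤ 2 := by
  by_cases h0 : a = 0 ∨ b = 0
  · by_cases h1 : a = 1 ∨ b = 1
    · apply mex_le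
      simp only [Finset.mem_insert, Finset.mem_singleton]
      omega
    · refine le_trans (mex_le (x := 1) ?_) (by norm_num)
      simp only [Finset.mem_insert, Finset.mem_singleton]
      omega
  · refine le_trans (mex_le (x := 0) ?_) (by norm_num)
    simp only [Finset.mem_insert, Finset.mem_singleton]
    omega

lemma sg_succ (n : ℕ) : sg (n + 1) =
    mex ({sg n} ∪
         (if 2 ∣ (n + 1) then {sg ((n + 1) / 2)} else ∅) ∪
         (if 3 ∣ (n + 1) then {sg ((n + 1) / 3)} else ∅)) := by
  rw [sg]

lemma sg_6k5 (k : ℕ) : sg (6*k+5) = mex {sg (6*k+4)} := by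
  have : 6*k+5 = (6*k+4) + 1 := by ring
  rw [this, sg_succ, if_neg (by omega), if_neg (by omega)]
  simp

lemma sg_6k1 (k : ℕ) : sg (6*k+1) = mex {sg (6*k)} := by
  have : 6*k+1 = (6*k) + 1 := by ring
  rw [this, sg_succ, if_neg (by omega), if_neg (by omega)]
  simp

lemma sg_6k4 (k : ℕ) : sg (6*k+4) = mex {sg (6*k+3), sg (3*k+2)} := by
  have : 6*k+4 = (6*k+3) + 1 := by ring
  rw [this, sg_succ, if_pos (by omega), if_neg (by omega)]
  rw [show (6*k+3+1)/2 = 3*k+2 from by omega]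
  congr 1
  all_goals (ext x; simp)

lemma sg_6k3 (k : ℕ) : sg (6*k+3) = mex {sg (6*k+2), sg (2*k+1)} := by
  have : 6*k+3 = (6*k+2) + 1 := by ring
  rw [this, sg_succ, if_neg (by omega), if_pos (by omega)]
  rw [show (6*k+2+1)/3 = 2*k+1 from by omega]
  congr 1
  all_goals (ext x; simp)

lemma sg_6k2 (k : ℕ) : sg (6*k+2) = mex {sg (6*k+1), sg (3*k+1)} := by
  have : 6*k+2 = (6*k+1) + 1 := by ring
  rw [this, sg_succ, if_pos (by omega), if_neg (by omega)]
  rw [show (6*k+1+1)/2 = 3*k+1 from by omega]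
  congr 1
  all_goals (ext x; simp)

lemma sg_6k0 (k : ℕ) : sg (6*k+6) = mex {sg (6*k+5), sg (3*k+3), sg (2*k+2)} := by
  have : 6*k+6 = (6*k+5) + 1 := by ring
  rw [this, sg_succ, if_pos (by omega), if_pos (by omega)]
  rw [show (6*k+5+1)/2 = 3*k+3 from by omega, show (6*k+5+1)/3 = 2*k+2 from by omega]
  rw [Finset.union_assoc, ← Finset.insert_eq, ← Finset.insert_eq]

theorem lemma_mod6 (m : ℕ) (hm : 7 ≤ m) (hmod : m % 6 = 5)
    (h : ∀ i : ℕ, i ≤ 7 → sg (m - i) ≠ 2) :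
    sg m = 0 := by
  obtain ⟨k, rfl⟩ : ∃ k, m = 6*k+5 := ⟨(m-5)/6, by omega⟩
  have hk : 1 ≤ k := by omega
  -- hypotheses at shifted points
  have h2 : sg (6*k+3) ≠ 2 := by
    have := h 2 (by norm_num); rwa [show 6*k+5-2 = 6*k+3 from by omega] at this
  have h3 : sg (6*k+2) ≠ 2 := by
    have := h 3 (by norm_num); rwa [show 6*k+5-3 = 6*k+2 from by omega] at this
  by_contra h0
  rw [sg_6k5] at h0
  -- sg (6k+4) = 0
  have e4 : sg (6*k+4) = 0 := by
    have := zero_mem_of_mex_ne_zero h0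
    exact (Finset.mem_singleton.mp this).symm
  -- from sg(6k+4)=0 : sg(6k+3) ≠ 0 and sg(3k+2) ≠ 0
  have hmem4 := mex_not_mem ({sg (6*k+3), sg (3*k+2)} : Finset ℕ)
  rw [← sg_6k4, e4] at hmem4
  simp only [Finset.mem_insert, Finset.mem_singleton] at hmem4
  push_neg at hmem4
  obtain ⟨n3, n3k2⟩ := hmem4
  -- sg(6k+3) = 1
  have e3 : sg (6*k+3) = 1 := by
    have hle := mex_pair_le (sg (6*k+2)) (sg (2*k+1))
    rw [← sg_6k3] at hle
    omega
  -- from sg(6k+3)=1 : sg(6k+2) ≠ 1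
  have hmem3 := mex_not_mem ({sg (6*k+2), sg (2*k+1)} : Finset ℕ)
  rw [← sg_6k3, e3] at hmem3
  simp only [Finset.mem_insert, Finset.mem_singleton] at hmem3
  push_neg at hmem3
  -- sg(6k+2) = 0
  have e2 : sg (6*k+2) = 0 := by
    have hle := mex_pair_le (sg (6*k+1)) (sg (3*k+1))
    rw [← sg_6k2] at hle
    omega
  -- from sg(6k+2)=0 : sg(6k+1) ≠ 0 and sg(3k+1) ≠ 0
  have hmem2 := mex_not_mem ({sg (6*k+1), sg (3*k+1)} : Finset ℕ)
  rw [← sg_6k2, e2] at hmem2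
  simp only [Finset.mem_insert, Finset.mem_singleton] at hmem2
  push_neg at hmem2
  obtain ⟨n1, n3k1⟩ := hmem2
  -- sg(6k) = 0
  have e0 : sg (6*k) = 0 := by
    by_contra hc
    have : sg (6*k+1) = 0 := by
      rw [sg_6k1]
      apply mex_eq_zero
      simpa using fun hh => hc hh.symm
    exact n1 this.symm
  -- from sg(6k)=0 : sg(3k) ≠ 0  (6k = 6(k-1)+6)
  have n3k : sg (3*k) ≠ 0 := by
    have hrw : 6*k = 6*(k-1)+6 := by omega
    have hmem0 := mex_not_mem ({sg (6*(k-1)+5), sg (3*(k-1)+3), sg (2*(k-1)+2)} : Finset ℕ)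
    rw [← sg_6k0, ← hrw, e0] at hmem0
    simp only [Finset.mem_insert, Finset.mem_singleton] at hmem0
    push_neg at hmem0
    have : 3*(k-1)+3 = 3*k := by omega
    rw [this] at hmem0
    exact fun hh => hmem0.2.1 hh.symm
  -- final contradiction by parity of k
  rcases Nat.even_or_odd k with ⟨j, hj⟩ | ⟨j, hj⟩
  · -- k = 2j : 3k+1 = 6j+1
    have : sg (3*k+1) = 0 := by
      rw [show 3*k+1 = 6*j+1 from by omega, sg_6k1]
      apply mex_eq_zero
      rw [show 6*j = 3*k from by omega]
      simpa using fun hh => n3k hh.symm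
    exact n3k1 this.symm
  · -- k = 2j+1 : 3k+2 = 6j+5
    have : sg (3*k+2) = 0 := by
      rw [show 3*k+2 = 6*j+5 from by omega, sg_6k5]
      apply mex_eq_zero
      rw [show 6*j+4 = 3*k+1 from by omega]
      simpa using n3k1
    exact n3k2 this.symm
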